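/- arXiv:2007.03361 — 6 statements merged into one kernel-verified Lean document; each statement's English description precedes it below -/
import Mathlib

section
/- Let k be a field and let α : ℕ → k be a sequence, with associated formal power series Z(T) = ∑_{n≥0} α_n T^n in k[[T]]. Then Z is rational (i.e. there exist polynomials P, Q ∈ k[T] with Q ≠ 0 and Q·Z = P in k[[T]]) if and only if there exist N and M in ℕ such that det(H_{m,N}) = 0 for all m > M, where H_{m,n} denotes the (n+1)×(n+1) Hankel matrix with (i,j) entry α_{m+i+j} for 0 ≤ i,j ≤ n. -/
/-!
Write `H_{m,n}` for the Hankel matrices of the statement. If `Q · Z = P`, then for `m > deg P` the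
coefficients of `T^{m+i+deg Q}`, `0 ≤ i ≤ deg Q`, of `Q · Z` vanish, i.e. the reversed
coefficient vector of `Q` is a (nonzero) kernel vector of `H_{m,deg Q}`.

Conversely, induct on `N`. If also `det H_{m,N-1}` vanishes eventually we are done by induction;
otherwise `det H_{m₀,N-1} ≠ 0` for some large `m₀`. Rows `1, …, N` of `H_{m,N}` and rows
`0, …, N-1` of `H_{m+1,N}` form the same `N × (N+1)` matrix, whose left `N × N` block is
`H_{m+1,N-1}` and whose right block is `H_{m+2,N-1}`. When the left block is invertible, the
kernel of this matrix is a line, so a kernel vector `v` of `H_{m₀-1,N}` is also one of `H_{m₀,N}`,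
and the right block is invertible as well. Inductively `v` annihilates every `H_{m,N}` with
`m ≥ m₀ - 1`; its first row is a linear recurrence for `α`, and the polynomial with reversed
coefficient vector `v` turns `Z` into a polynomial.
-/

open Polynomial Finset

namespace Matrix

section Kernel

variable {R : Type*} [CommRing R] {n : ℕ} (A : Matrix (Fin n) (Fin (n + 1)) R)

theorem mulVec_eq_submatrix_succAbove_mulVec {x : Fin (n + 1) → R} (p : Fin (n + 1))
    (hp : x p = 0) : A *ᵥ x = A.submatrix id p.succAbove *ᵥ (x ∘ p.succAbove) := by
  funext i
  simp [mulVec, dotProduct, Fin.sum_univ_succAbove _ p, hp]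

variable [IsDomain R]

theorem eq_zero_of_mulVec_eq_zero_of_apply_eq_zero {x : Fin (n + 1) → R} (p : Fin (n + 1))
    (hA : (A.submatrix id p.succAbove).det ≠ 0) (hx : A *ᵥ x = 0) (hp : x p = 0) : x = 0 := by
  have hrest : x ∘ p.succAbove = 0 :=
    eq_zero_of_mulVec_eq_zero hA (by rw [← mulVec_eq_submatrix_succAbove_mulVec A p hp, hx])
  funext j
  induction j using Fin.succAboveCases p with
  | x => exact hp
  | p j => exact congrFun hrest j

theorem apply_smul_eq_apply_smul_of_mulVec_eq_zero {x y : Fin (n + 1) → R} (p : Fin (n + 1))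
    (hA : (A.submatrix id p.succAbove).det ≠ 0) (hx : A *ᵥ x = 0) (hy : A *ᵥ y = 0) :
    x p • y = y p • x :=
  sub_eq_zero.mp <| eq_zero_of_mulVec_eq_zero_of_apply_eq_zero A p hA
    (by simp [mulVec_sub, mulVec_smul, hx, hy]) (by simp [mul_comm])

theorem det_submatrix_succ_ne_zero {v : Fin (n + 1) → R}
    (hA : (A.submatrix id Fin.castSucc).det ≠ 0) (hv : A *ᵥ v = 0) (hv0 : v 0 ≠ 0) :
    (A.submatrix id Fin.succ).det ≠ 0 := by
  rw [← Fin.succAbove_last] at hA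
  intro h
  obtain ⟨d, hd, hAd⟩ := exists_mulVec_eq_zero_iff.mpr h
  set e : Fin (n + 1) → R := Fin.cons 0 d
  have he : A *ᵥ e = 0 := by
    rw [mulVec_eq_submatrix_succAbove_mulVec A 0 rfl, Fin.succAbove_zero]
    exact hAd
  have helast : e (Fin.last n) = 0 := by
    have := congrFun (apply_smul_eq_apply_smul_of_mulVec_eq_zero A _ hA hv he) 0
    simpa [e, hv0] using this.symm
  refine hd (funext fun j => ?_)
  simpa [e] using congrFun (eq_zero_of_mulVec_eq_zero_of_apply_eq_zero A _ hA he helast) j.succ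

end Kernel

section Hankel

variable {R : Type*}

/-- The paper's `H_{m,n}` is `hankel α m (n + 1) (n + 1)`. -/
def hankel (α : ℕ → R) (m p q : ℕ) : Matrix (Fin p) (Fin q) R :=
  of fun i j => α (m + i + j)

variable (α : ℕ → R) (m : ℕ) {p q : ℕ}

@[simp]
theorem hankel_apply (i : Fin p) (j : Fin q) : hankel α m p q i j = α (m + i + j) := rfl

theorem hankel_submatrix_castSucc :
    (hankel α m p (q + 1)).submatrix id Fin.castSucc = hankel α m p q :=
  rfl

theorem hankel_submatrix_succ :
    (hankel α m p (q + 1)).submatrix id Fin.succ = hankel α (m + 1) p q := by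
  ext i j
  simp only [submatrix_apply, id, hankel_apply, Fin.val_succ]
  congr 1
  omega

variable [NonUnitalNonAssocSemiring R] (v : Fin q → R)

theorem hankel_mulVec_apply (i : Fin p) :
    (hankel α m p q *ᵥ v) i = ∑ j : Fin q, α (m + i + j) * v j :=
  rfl

theorem hankel_mulVec_eq_comp_castSucc :
    hankel α m p q *ᵥ v = (hankel α m (p + 1) q *ᵥ v) ∘ Fin.castSucc :=
  rfl

theorem hankel_add_one_mulVec_eq_comp_succ :
    hankel α (m + 1) p q *ᵥ v = (hankel α m (p + 1) q *ᵥ v) ∘ Fin.succ := by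
  funext i
  simp only [Function.comp_apply, hankel_mulVec_apply, Fin.val_succ]
  congr! 3
  omega

end Hankel

section HankelKernel

variable {R : Type*} [CommRing R] [IsDomain R] {α : ℕ → R} {m n : ℕ} {v : Fin (n + 1) → R}

theorem det_hankel_add_two_ne_zero (hv : hankel α m (n + 1) (n + 1) *ᵥ v = 0) (hv0 : v ≠ 0)
    (hH : (hankel α (m + 1) n n).det ≠ 0) : (hankel α (m + 2) n n).det ≠ 0 := by
  have hfirst : v 0 ≠ 0 := by
    refine fun h => hv0 (eq_zero_of_mulVec_eq_zero_of_apply_eq_zero (hankel α m n (n + 1)) 0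
      ?_ ?_ h)
    · rwa [Fin.succAbove_zero, hankel_submatrix_succ]
    · rw [hankel_mulVec_eq_comp_castSucc, hv]; rfl
  have := det_submatrix_succ_ne_zero (hankel α (m + 1) n (n + 1))
    (by rwa [hankel_submatrix_castSucc])
    (by rw [hankel_add_one_mulVec_eq_comp_succ, hv]; rfl) hfirst
  rwa [hankel_submatrix_succ] at this

theorem hankel_add_one_mulVec_eq_zero (hv : hankel α m (n + 1) (n + 1) *ᵥ v = 0)
    (hH : (hankel α (m + 1) n n).det ≠ 0) (hB : (hankel α (m + 1) (n + 1) (n + 1)).det = 0) :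
    hankel α (m + 1) (n + 1) (n + 1) *ᵥ v = 0 := by
  obtain ⟨u, hu0, hu⟩ := exists_mulVec_eq_zero_iff.mpr hB
  have hA : ((hankel α (m + 1) n (n + 1)).submatrix id (Fin.last n).succAbove).det ≠ 0 := by
    rwa [Fin.succAbove_last, hankel_submatrix_castSucc]
  have hRu : hankel α (m + 1) n (n + 1) *ᵥ u = 0 := by
    rw [hankel_mulVec_eq_comp_castSucc, hu]; rfl
  have hRv : hankel α (m + 1) n (n + 1) *ᵥ v = 0 := by
    rw [hankel_add_one_mulVec_eq_comp_succ, hv]; rfl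
  have hulast : u (Fin.last n) ≠ 0 :=
    fun h => hu0 (eq_zero_of_mulVec_eq_zero_of_apply_eq_zero _ _ hA hRu h)
  have hprop := apply_smul_eq_apply_smul_of_mulVec_eq_zero _ _ hA hRu hRv
  have : u (Fin.last n) • (hankel α (m + 1) (n + 1) (n + 1) *ᵥ v) = 0 := by
    rw [← mulVec_smul, hprop, mulVec_smul, hu, smul_zero]
  exact (smul_eq_zero.mp this).resolve_left hulast

theorem hankel_mulVec_eq_zero_of_le {m₀ : ℕ} (hv0 : v ≠ 0)
    (hv : hankel α m₀ (n + 1) (n + 1) *ᵥ v = 0) (hH : (hankel α (m₀ + 1) n n).det ≠ 0)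
    (hB : ∀ m ≥ m₀, (hankel α m (n + 1) (n + 1)).det = 0) :
    ∀ m ≥ m₀, hankel α m (n + 1) (n + 1) *ᵥ v = 0 := by
  suffices ∀ m ≥ m₀, hankel α m (n + 1) (n + 1) *ᵥ v = 0 ∧ (hankel α (m + 1) n n).det ≠ 0 from
    fun m hm => (this m hm).1
  intro m hm
  induction m, hm using Nat.le_induction with
  | base => exact ⟨hv, hH⟩
  | succ m hm ih =>
    exact ⟨hankel_add_one_mulVec_eq_zero ih.1 ih.2 (hB _ (by omega)),
      det_hankel_add_two_ne_zero ih.1 hv0 ih.2⟩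

theorem exists_recurrence_of_det_hankel_eq_zero {N M : ℕ}
    (h : ∀ m > M, (hankel α m (N + 1) (N + 1)).det = 0) :
    ∃ (d : ℕ) (v : Fin (d + 1) → R) (M' : ℕ),
      v ≠ 0 ∧ ∀ m ≥ M', ∑ j : Fin (d + 1), α (m + j) * v j = 0 := by
  induction N generalizing M with
  | zero => exact ⟨0, 1, M + 1, one_ne_zero, fun m hm => by simpa using h m hm⟩
  | succ N ih =>
    by_cases hsmall : ∃ M', ∀ m > M', (hankel α m (N + 1) (N + 1)).det = 0
    · obtain ⟨M', hM'⟩ := hsmall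
      exact ih hM'
    push Not at hsmall
    obtain ⟨m₀, hm₀, hH⟩ := hsmall (M + 1)
    obtain ⟨v, hv0, hv⟩ := exists_mulVec_eq_zero_iff.mpr (h (m₀ - 1) (by omega))
    have hH' : (hankel α (m₀ - 1 + 1) (N + 1) (N + 1)).det ≠ 0 := by
      rwa [Nat.sub_add_cancel (by omega)]
    have hrel := hankel_mulVec_eq_zero_of_le hv0 hv hH' fun m hm => h m (by omega)
    exact ⟨N + 1, v, m₀ - 1, hv0, fun m hm => by
      simpa [hankel_mulVec_apply] using congrFun (hrel m hm) 0⟩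

end HankelKernel

end Matrix

namespace Polynomial

variable {R : Type*} [CommRing R]

theorem coeff_coe_mul_mk (Q : R[X]) {d : ℕ} (hQ : Q.natDegree ≤ d) (α : ℕ → R) (m : ℕ) :
    PowerSeries.coeff (m + d) ((Q : PowerSeries R) * PowerSeries.mk α) =
      ∑ j : Fin (d + 1), α (m + j) * Q.coeff (d - j) := by
  rw [PowerSeries.coeff_mul, Finset.Nat.sum_antidiagonal_eq_sum_range_succ
    (fun i j => PowerSeries.coeff i (Q : PowerSeries R) * PowerSeries.coeff j (PowerSeries.mk α))]
  simp only [coeff_coe, PowerSeries.coeff_mk]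
  rw [← Finset.sum_subset (range_subset_range.mpr (by omega : d + 1 ≤ (m + d).succ)),
    ← Finset.sum_range_reflect, Fin.sum_univ_eq_sum_range (fun j => α (m + j) * Q.coeff (d - j))]
  · refine Finset.sum_congr rfl fun j hj => ?_
    rw [mem_range] at hj
    rw [mul_comm, show m + d - (d + 1 - 1 - j) = m + j by omega,
      show d + 1 - 1 - j = d - j by omega]
  · intro l _ hl
    rw [mem_range, not_lt] at hl
    rw [coeff_eq_zero_of_natDegree_lt (by omega), zero_mul]

end Polynomial

open Matrix

theorem det_hankel_eq_zero_of_coe_mul_mk_eq {R : Type*} [CommRing R] [IsDomain R] {α : ℕ → R}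
    {P Q : R[X]} (hQ : Q ≠ 0) (h : (Q : PowerSeries R) * PowerSeries.mk α = P) :
    ∀ m > P.natDegree, (hankel α m (Q.natDegree + 1) (Q.natDegree + 1)).det = 0 := by
  intro m hm
  rw [← exists_mulVec_eq_zero_iff]
  refine ⟨fun j => Q.coeff (Q.natDegree - j), fun h0 => ?_, funext fun i => ?_⟩
  · simpa [hQ] using congrFun h0 0
  · rw [hankel_mulVec_apply, ← coeff_coe_mul_mk Q le_rfl, h, coeff_coe]
    exact coeff_eq_zero_of_natDegree_lt (by omega)

theorem exists_coe_mul_mk_eq_of_recurrence {R : Type*} [CommRing R] {α : ℕ → R} {d M : ℕ}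
    (v : Fin (d + 1) → R) (hv : v ≠ 0) (h : ∀ m ≥ M, ∑ j : Fin (d + 1), α (m + j) * v j = 0) :
    ∃ P Q : R[X], Q ≠ 0 ∧ (Q : PowerSeries R) * PowerSeries.mk α = P := by
  classical
  set Q := ofFn (d + 1) (v ∘ Fin.rev)
  have hQd : Q.natDegree ≤ d := Nat.lt_succ_iff.mp (ofFn_natDegree_lt (by omega) _)
  have hQcoeff (j : Fin (d + 1)) : Q.coeff (d - j) = v j := by
    rw [ofFn_coeff_eq_val_of_lt _ (by omega), Function.comp_apply]
    congr
    ext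
    simp only [Fin.val_rev]
    omega
  refine ⟨PowerSeries.trunc (M + d) (Q * PowerSeries.mk α), Q,
    fun h0 => hv (funext fun j => by rw [← hQcoeff j, h0, coeff_zero, Pi.zero_apply]), ?_⟩
  ext s
  rw [coeff_coe, PowerSeries.coeff_trunc]
  split_ifs with hs
  · rfl
  obtain ⟨m, rfl⟩ : ∃ m, s = m + d := ⟨s - d, by omega⟩
  simp only [coeff_coe_mul_mk Q hQd, hQcoeff]
  exact h m (by omega)

/-- **Kronecker rationality criterion via Hankel determinants.**
Let `k` be a field, `α : ℕ → k`, with power series `Z(T) = ∑ αₙ Tⁿ`.  Then `Z` is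
rational (i.e. `Q · Z = P` for polynomials `P, Q` with `Q ≠ 0`) if and only if
there exist `N` and `M` such that `det H_{m,N} = 0` for all `m > M`, where
`H_{m,n}` is the `(n+1) × (n+1)` Hankel matrix with `(i,j)` entry `α_{m+i+j}`. -/
theorem rational_iff_hankel_det_eventually_zero
    {k : Type*} [Field k] (α : ℕ → k) :
    (∃ P Q : Polynomial k, Q ≠ 0 ∧
        (Q : PowerSeries k) * PowerSeries.mk α = (P : PowerSeries k)) ↔
    (∃ N M : ℕ, ∀ m > M,
        (Matrix.of fun i j : Fin (N + 1) => α (m + i + j)).det = 0) := by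
  constructor
  · rintro ⟨P, Q, hQ, h⟩
    exact ⟨Q.natDegree, P.natDegree, det_hankel_eq_zero_of_coe_mul_mk_eq hQ h⟩
  · rintro ⟨N, M, h⟩
    obtain ⟨d, v, M', hv, hrel⟩ := exists_recurrence_of_det_hankel_eq_zero h
    exact exists_coe_mul_mk_eq_of_recurrence v hv hrel
end

section
/- Let k be a field and let α : ℕ → k be a sequence. The following are equivalent: (c) there exist N and M in ℕ such that det(H_{m,N}) = 0 for all m > M; (d) there exist N and M in ℕ such that det(H_{m,n}) = 0 for all m > M and all n > N. Here H_{m,n} denotes the (n+1)×(n+1) Hankel matrix with (i,j) entry α_{m+i+j} for 0 ≤ i,j ≤ n. -/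
open Finset

section HankelAux

variable {k : Type*} [Field k] (α : ℕ → k)

private lemma hankel_det_zero_of_rel (n m : ℕ) (c : ℕ → k)
    (hne : ∃ i, i ≤ n ∧ c i ≠ 0)
    (hrel : ∀ j, j ≤ n → ∑ i ∈ range (n + 1), c i * α (m + i + j) = 0) :
    (Matrix.of fun i j : Fin (n + 1) => α (m + i + j)).det = 0 := by
  rw [← Matrix.exists_vecMul_eq_zero_iff]
  refine ⟨fun i => c i, ?_, ?_⟩
  · obtain ⟨i0, hi0, hc⟩ := hne
    intro h0
    exact hc (congrFun h0 ⟨i0, by omega⟩)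
  · funext j
    have h := hrel j (Nat.lt_succ_iff.mp j.isLt)
    rw [← Fin.sum_univ_eq_sum_range (fun i => c i * α (m + i + j))] at h
    simpa [Matrix.vecMul, dotProduct] using h

private lemma rel_of_hankel_det_zero (n m : ℕ)
    (h : (Matrix.of fun i j : Fin (n + 1) => α (m + i + j)).det = 0) :
    ∃ c : ℕ → k, (∃ i, i ≤ n ∧ c i ≠ 0) ∧ (∀ i, n < i → c i = 0) ∧
      ∀ j, j ≤ n → ∑ i ∈ range (n + 1), c i * α (m + i + j) = 0 := by
  rw [← Matrix.exists_vecMul_eq_zero_iff] at h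
  obtain ⟨v, hv, hveq⟩ := h
  refine ⟨fun i => if h : i < n + 1 then v ⟨i, h⟩ else 0, ?_, ?_, ?_⟩
  · by_contra hall
    push_neg at hall
    apply hv
    funext i
    have := hall i (Nat.lt_succ_iff.mp i.isLt)
    simpa [i.isLt] using this
  · intro i hi
    exact dif_neg (by omega)
  · intro j hj
    have h2 := congrFun hveq ⟨j, by omega⟩
    rw [← Fin.sum_univ_eq_sum_range
      (fun i => (if h : i < n + 1 then v ⟨i, h⟩ else 0) * α (m + i + j))]
    simp only [Fin.is_lt, dif_pos, Fin.eta]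
    simpa [Matrix.vecMul, dotProduct] using h2

private lemma hankel_prop (n t : ℕ)
    (hw : (Matrix.of fun i j : Fin (n + 1 + 1) => α (t + i + j)).det = 0)
    (hu : (Matrix.of fun i j : Fin (n + 1) => α (t + i + j)).det = 0) :
    (Matrix.of fun i j : Fin (n + 1) => α (t + 1 + i + j)).det = 0 := by
  obtain ⟨a, ⟨ia, hia, hiane⟩, hasup, haeq⟩ := rel_of_hankel_det_zero α (n + 1) t hw
  obtain ⟨b, ⟨ib, hib, hibne⟩, hbsup, hbeq⟩ := rel_of_hankel_det_zero α n t hu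
  by_cases ha : a 0 = 0
  · -- drop the first coefficient of `a`
    by_cases h'' : ∃ i, i ≤ n ∧ a (i + 1) ≠ 0
    · apply hankel_det_zero_of_rel α n (t + 1) (fun i => a (i + 1)) h''
      intro j hj
      have h := haeq j (by omega)
      rw [Finset.sum_range_succ'] at h
      rw [ha, zero_mul, add_zero] at h
      rw [← h]
      exact Finset.sum_congr rfl fun i _ => by rw [show t + (i + 1) + j = t + 1 + i + j by omega]
    · exfalso
      push_neg at h''
      rcases Nat.eq_zero_or_pos ia with h0 | h0
      · exact hiane (h0 ▸ ha)
      · exact hiane (by rw [show ia = (ia - 1) + 1 by omega]; exact h'' (ia - 1) (by omega))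
  · by_cases hb : b 0 = 0
    · -- drop the first coefficient of `b`; pad with a zero at the top index
      apply hankel_det_zero_of_rel α n (t + 1) (fun i => if i < n then b (i + 1) else 0)
      · rcases Nat.eq_zero_or_pos ib with h0 | h0
        · exact (hibne (by rw [h0]; exact hb)).elim
        · exact ⟨ib - 1, by omega, by rw [if_pos (by omega), show ib - 1 + 1 = ib by omega]; exact hibne⟩
      · intro j hj
        have h := hbeq j hj
        rw [Finset.sum_range_succ'] at h
        rw [hb, zero_mul, add_zero] at h
        rw [Finset.sum_range_succ, if_neg (lt_irrefl n), zero_mul, add_zero]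
        rw [← h]
        exact Finset.sum_congr rfl fun i hi => by
          rw [if_pos (Finset.mem_range.mp hi), show t + (i + 1) + j = t + 1 + i + j by omega]
    · -- both leading coefficients nonzero: combine
      set q : ℕ → k := fun i => a 0 * (if i ≤ n then b i else 0) - b 0 * a i with hq
      have hq0 : q 0 = 0 := by simp [hq, mul_comm]
      have hqeq : ∀ j, j ≤ n → ∑ i ∈ range (n + 1 + 1), q i * α (t + i + j) = 0 := by
        intro j hj
        have h1 := haeq j (by omega)
        have h2 := hbeq j hj
        have : ∑ i ∈ range (n + 1 + 1), q i * α (t + i + j)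
            = a 0 * ∑ i ∈ range (n + 1 + 1), (if i ≤ n then b i else 0) * α (t + i + j)
              - b 0 * ∑ i ∈ range (n + 1 + 1), a i * α (t + i + j) := by
          rw [Finset.mul_sum, Finset.mul_sum, ← Finset.sum_sub_distrib]
          refine Finset.sum_congr rfl fun i _ => ?_
          by_cases hin : i ≤ n <;> simp [hq, hin] <;> ring
        rw [this, h1, mul_zero, sub_zero]
        rw [Finset.sum_range_succ, if_neg (by omega), zero_mul, add_zero]
        rw [show ∑ i ∈ range (n + 1), (if i ≤ n then b i else 0) * α (t + i + j)
              = ∑ i ∈ range (n + 1), b i * α (t + i + j) from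
            Finset.sum_congr rfl fun i hi => by rw [if_pos (by have := Finset.mem_range.mp hi; omega)]]
        rw [h2, mul_zero]
      by_cases h'' : ∃ i, i ≤ n ∧ q (i + 1) ≠ 0
      · apply hankel_det_zero_of_rel α n (t + 1) (fun i => q (i + 1)) h''
        intro j hj
        have h := hqeq j hj
        rw [Finset.sum_range_succ'] at h
        rw [hq0, zero_mul, add_zero] at h
        rw [← h]
        exact Finset.sum_congr rfl fun i _ => by rw [show t + (i + 1) + j = t + 1 + i + j by omega]
      · -- then a (n+1) = 0 and we can use `a` itself, shifted
        push_neg at h''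
        have han : a (n + 1) = 0 := by
          have := h'' n le_rfl
          rw [hq] at this
          simp only [if_neg (by omega : ¬ n + 1 ≤ n), mul_zero, zero_sub, neg_eq_zero] at this
          exact (mul_eq_zero.mp this).resolve_left hb
        apply hankel_det_zero_of_rel α n (t + 1) a ⟨0, Nat.zero_le n, ha⟩
        intro j hj
        have h := haeq (j + 1) (by omega)
        rw [Finset.sum_range_succ, han, zero_mul, add_zero] at h
        rw [← h]
        exact Finset.sum_congr rfl fun i _ => by rw [show t + i + (j + 1) = t + 1 + i + j by omega]

private lemma hankel_step (n m : ℕ)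
    (hw : (Matrix.of fun i j : Fin (n + 1 + 1) => α (m + i + j)).det = 0)
    (hu : (Matrix.of fun i j : Fin (n + 1) => α (m + i + j)).det ≠ 0) :
    ∃ f : ℕ → k, ∀ j, j ≤ n + 1 →
      α (m + (n + 1) + j) = ∑ i ∈ range (n + 1), f i * α (m + i + j) := by
  obtain ⟨a, ⟨ia, hia, hiane⟩, hasup, haeq⟩ := rel_of_hankel_det_zero α (n + 1) m hw
  by_cases han : a (n + 1) = 0
  · exfalso
    apply hu
    apply hankel_det_zero_of_rel α n m a
    · refine ⟨ia, ?_, hiane⟩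
      rcases Nat.lt_or_ge ia (n + 1) with h | h
      · omega
      · exact absurd (by rw [show ia = n + 1 by omega]; exact han) hiane
    · intro j hj
      have h := haeq j (by omega)
      rw [Finset.sum_range_succ, han, zero_mul, add_zero] at h
      exact h
  · refine ⟨fun i => -(a i / a (n + 1)), fun j hj => ?_⟩
    have h := haeq j hj
    rw [Finset.sum_range_succ] at h
    have h3 : ∑ i ∈ range (n + 1), -(a i / a (n + 1)) * α (m + i + j)
        = (∑ i ∈ range (n + 1), a i * α (m + i + j)) * (-(a (n + 1))⁻¹) := by
      rw [Finset.sum_mul]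
      refine Finset.sum_congr rfl fun i _ => ?_
      rw [div_eq_mul_inv]
      ring
    have h4 : ∑ i ∈ range (n + 1), a i * α (m + i + j)
        = -(a (n + 1) * α (m + (n + 1) + j)) := by
      linear_combination h
    rw [h3, h4]
    field_simp

private lemma hankel_kernel (n M : ℕ) :
    ∃ lam : ℕ → k, (∃ i, i ≤ n + 1 ∧ lam i ≠ 0) ∧
      ∀ i, i ≤ n → ∑ j ∈ range (n + 2), lam j * α (M + 1 + i + j) = 0 := by
  set B : Matrix (Fin (n + 2)) (Fin (n + 2)) k :=
    Matrix.of (fun i j => if (i : ℕ) ≤ n then α (M + 1 + i + j) else 0) with hB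
  have hdet : B.det = 0 :=
    Matrix.det_eq_zero_of_row_eq_zero ⟨n + 1, by omega⟩ (fun j => by simp [hB])
  obtain ⟨v, hv, hveq⟩ := Matrix.exists_mulVec_eq_zero_iff.mpr hdet
  refine ⟨fun j => if h : j < n + 2 then v ⟨j, h⟩ else 0, ?_, ?_⟩
  · by_contra hall
    push_neg at hall
    apply hv
    funext i
    have := hall i (Nat.lt_succ_iff.mp i.isLt)
    simpa [i.isLt] using this
  · intro i hi
    have h2 := congrFun hveq ⟨i, by omega⟩
    rw [← Fin.sum_univ_eq_sum_range
      (fun j => (if h : j < n + 2 then v ⟨j, h⟩ else 0) * α (M + 1 + i + j))]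
    simp only [Fin.is_lt, dif_pos, Fin.eta]
    have h3 : ∀ j : Fin (n + 2), B ⟨i, by omega⟩ j = α (M + 1 + i + j) := by
      intro j
      simp [hB, hi]
    simp only [Matrix.mulVec, dotProduct, Pi.zero_apply] at h2
    rw [← h2]
    exact Finset.sum_congr rfl fun j _ => by rw [h3 j, mul_comm]

private lemma hankel_case2 (n M : ℕ)
    (h1 : ∀ m, M < m → (Matrix.of fun i j : Fin (n + 1 + 1) => α (m + i + j)).det = 0)
    (h0 : ∀ m, M < m → (Matrix.of fun i j : Fin (n + 1) => α (m + i + j)).det ≠ 0) :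
    ∃ lam : ℕ → k, (∃ i, i ≤ n + 1 ∧ lam i ≠ 0) ∧
      ∀ s, M < s → ∑ j ∈ range (n + 2), lam j * α (s + j) = 0 := by
  obtain ⟨lam, hne, hker⟩ := hankel_kernel α n M
  refine ⟨lam, hne, ?_⟩
  intro s
  induction s using Nat.strong_induction_on with
  | _ s IH =>
    intro hs
    by_cases hsmall : s ≤ M + 1 + n
    · have h := hker (s - (M + 1)) (by omega)
      rwa [show M + 1 + (s - (M + 1)) = s by omega] at h
    · set m := s - (n + 1) with hm
      have hms : M < m := by omega
      obtain ⟨f, hf⟩ := hankel_step α n m (h1 m hms) (h0 m hms)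
      calc ∑ j ∈ range (n + 2), lam j * α (s + j)
          = ∑ j ∈ range (n + 2), lam j * ∑ i ∈ range (n + 1), f i * α (m + i + j) := by
            refine Finset.sum_congr rfl fun j hj => ?_
            rw [show s + j = m + (n + 1) + j by omega,
              hf j (Nat.lt_succ_iff.mp (Finset.mem_range.mp hj))]
        _ = ∑ i ∈ range (n + 1), f i * ∑ j ∈ range (n + 2), lam j * α (m + i + j) := by
            simp_rw [Finset.mul_sum]
            rw [Finset.sum_comm]
            exact Finset.sum_congr rfl fun i _ => Finset.sum_congr rfl fun j _ => by ring
        _ = 0 := by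
            refine Finset.sum_eq_zero fun i hi => ?_
            have := Finset.mem_range.mp hi
            rw [IH (m + i) (by omega) (by omega), mul_zero]

private lemma hankel_main (N : ℕ) : ∀ M : ℕ,
    (∀ m, M < m → (Matrix.of fun i j : Fin (N + 1) => α (m + i + j)).det = 0) →
    ∃ d M' : ℕ, ∃ lam : ℕ → k, d ≤ N ∧ (∃ i, i ≤ d ∧ lam i ≠ 0) ∧
      ∀ s, M' < s → ∑ j ∈ range (d + 1), lam j * α (s + j) = 0 := by
  induction N with
  | zero =>
    intro M h
    refine ⟨0, M, fun _ => 1, le_refl 0, ⟨0, le_refl 0, one_ne_zero⟩, fun s hs => ?_⟩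
    have h2 := h s hs
    rw [Matrix.det_fin_one] at h2
    simpa using h2
  | succ N IH =>
    intro M h
    by_cases hc : ∃ M2, ∀ m, M2 < m →
        (Matrix.of fun i j : Fin (N + 1) => α (m + i + j)).det = 0
    · obtain ⟨M2, h2⟩ := hc
      obtain ⟨d, M', lam, hd, hne, hrec⟩ := IH M2 h2
      exact ⟨d, M', lam, by omega, hne, hrec⟩
    · push_neg at hc
      have h0 : ∀ m, M < m → (Matrix.of fun i j : Fin (N + 1) => α (m + i + j)).det ≠ 0 := by
        intro t ht hdet
        have hall : ∀ p, (Matrix.of fun i j : Fin (N + 1) => α (t + p + i + j)).det = 0 := by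
          intro p
          induction p with
          | zero => simpa using hdet
          | succ p hp => exact hankel_prop α N (t + p) (h (t + p) (by omega)) hp
        obtain ⟨m, hm, hmne⟩ := hc t
        apply hmne
        have h4 := hall (m - t)
        rwa [show t + (m - t) = m by omega] at h4
      obtain ⟨lam, hne, hrec⟩ := hankel_case2 α N M h h0
      exact ⟨N + 1, M, lam, le_refl _, hne, hrec⟩

end HankelAux

/-- For a sequence `α : ℕ → k` over a field `k`, the following are equivalent:
(c) there exist `N, M` with `det H_{m,N} = 0` for all `m > M`;
(d) there exist `N, M` with `det H_{m,n} = 0` for all `m > M` and all `n > N`.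
Here `H_{m,n}` is the `(n+1) × (n+1)` Hankel matrix with `(i,j)` entry `α_{m+i+j}`. -/
theorem hankel_det_eventually_zero_iff_eventually_zero_all_sizes
    {k : Type*} [Field k] (α : ℕ → k) :
    (∃ N M : ℕ, ∀ m > M,
        (Matrix.of fun i j : Fin (N + 1) => α (m + i + j)).det = 0) ↔
    (∃ N M : ℕ, ∀ m > M, ∀ n > N,
        (Matrix.of fun i j : Fin (n + 1) => α (m + i + j)).det = 0) := by
  constructor
  · rintro ⟨N, M, h⟩
    obtain ⟨d, M', lam, hd, ⟨i0, hi0, hi0ne⟩, hrec⟩ :=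
      hankel_main α N M (fun m hm => h m hm)
    refine ⟨N, M', fun m hm n hn => ?_⟩
    apply hankel_det_zero_of_rel α n m (fun i => if i ≤ d then lam i else 0)
    · exact ⟨i0, by omega, by rw [if_pos hi0]; exact hi0ne⟩
    · intro j hj
      have hsub : ∑ i ∈ range (n + 1), (if i ≤ d then lam i else 0) * α (m + i + j)
          = ∑ i ∈ range (d + 1), lam i * α (m + i + j) := by
        have e1 : ∑ i ∈ range (d + 1), (if i ≤ d then lam i else 0) * α (m + i + j)
            = ∑ i ∈ range (n + 1), (if i ≤ d then lam i else 0) * α (m + i + j) :=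
          Finset.sum_subset (Finset.range_subset_range.mpr (by omega))
            (fun i _ hni => by
              rw [if_neg fun hle => hni (Finset.mem_range.mpr (by omega)), zero_mul])
        rw [← e1]
        exact Finset.sum_congr rfl fun i hi => by
          rw [if_pos (Nat.lt_succ_iff.mp (Finset.mem_range.mp hi))]
      rw [hsub]
      have h2 := hrec (m + j) (by omega)
      rw [← h2]
      exact Finset.sum_congr rfl fun i _ => by rw [show m + i + j = m + j + i by omega]
  · rintro ⟨N, M, h⟩
    exact ⟨N + 1, M, fun m hm => h m hm (N + 1) (by omega)⟩
end

section
/- Let k be a field, fix M ≥ 1 and N ≥ 0, set R' := k[γ_1, …, γ_M, β_1, …, β_N] and K := max(N+1, M), and let α_n := h_n(γ/β). Then the quotient A := R'[x] / rad(B_α) of the polynomial ring R'[x] by the radical of the Hankel pairing B_α is a free R'-module of rank K, with basis the images of the monomials 1, x, …, x^{K−1}. -/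
open MvPolynomial Finset

/-- The Hankel pairing associated to a sequence `α`:
`B_α(xᵃ, xᵇ) = α_{a+b}`, i.e. `B_α(f,g) = ∑ₙ (fg)ₙ αₙ`. -/
noncomputable def hankelPair {R : Type*} [CommRing R] (α : ℕ → R) (f g : Polynomial R) : R :=
  (f * g).sum fun n c => c * α n

/-- The radical of the Hankel pairing `B_α`, as an ideal of `R[x]`. -/
noncomputable def hankelRadical {R : Type*} [CommRing R] (α : ℕ → R) : Ideal (Polynomial R) where
  carrier := {f | ∀ g, hankelPair α f g = 0}
  zero_mem' := by
    intro g
    simp [hankelPair]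
  add_mem' := by
    intro a b ha hb g
    have h : (a + b) * g = a * g + b * g := add_mul a b g
    simp only [hankelPair, Set.mem_setOf_eq] at ha hb ⊢
    rw [h, Polynomial.sum_add_index (a * g) (b * g) _ (fun i => by simp)
      (fun i b₁ b₂ => by ring), ha g, hb g, add_zero]
  smul_mem' := by
    intro c f hf g
    simp only [hankelPair, smul_eq_mul, Set.mem_setOf_eq] at hf ⊢
    have h : c * f * g = f * (c * g) := by ring
    rw [h]
    exact hf (c * g)

/-- The supersymmetric complete function
`h_n(γ/β) = ∑_{l=0}^{min(n,N)} h_{n−l}(γ) e_l(β)` with coefficients in a field `k`. -/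
noncomputable def hSusy (k : Type*) [Field k] (M N : ℕ) (n : ℕ) :
    MvPolynomial (Fin M ⊕ Fin N) k :=
  ∑ l ∈ Finset.range (min n N + 1),
    rename Sum.inl (hsymm (Fin M) k (n - l)) * rename Sum.inr (esymm (Fin N) k l)

/-!
The generating function of `αₙ = hₙ(γ/β)` is rational: `P(t) · ∑ αₙ tⁿ = E(t)` with
`P = ∏ᵢ (1 - γᵢ t)` of degree `M` and `E = ∏ⱼ (1 + βⱼ t)` of degree `N`. Reflecting polynomials
turns the Hankel pairing into coefficients of this power series: `f` of degree `≤ D` lies in the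
radical exactly when `rev_D(f) · ∑ αₙ tⁿ` is a polynomial of degree `< D`. Hence the monic
reversal `rev_K(P)` lies in the radical, so `1, x, …, x^{K-1}` span the quotient. Conversely a
nonzero `f` of degree `< K` in the radical would give `rev(f) · E = P · B` with `deg B < K - 1`;
since `γᵢ + βⱼ ≠ 0`, `P` and `E` are coprime over the fraction field, forcing `M ≤ K - 1` and
`N < K - 1`, which is impossible for `K = max (N + 1) M`. So the radical is the principal ideal of
`rev_K(P)`, and the quotient has the power basis of `AdjoinRoot`.
-/

open scoped PowerSeries Polynomial

namespace Polynomial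

variable {R : Type*} [CommRing R]

@[norm_cast]
lemma coe_prod {ι : Type*} (s : Finset ι) (f : ι → R[X]) :
    ((∏ i ∈ s, f i : R[X]) : R⟦X⟧) = ∏ i ∈ s, (f i : R⟦X⟧) :=
  map_prod coeToPowerSeries.ringHom f s

lemma coeff_prod_one_add_C_mul_X {ι : Type*} (s : Finset ι) (r : ι → R) (n : ℕ) :
    (∏ i ∈ s, (1 + C (r i) * X)).coeff n = ∑ t ∈ s.powersetCard n, ∏ i ∈ t, r i := by
  classical
  simp_rw [Finset.prod_one_add, Finset.prod_mul_distrib, Finset.prod_const, ← map_prod,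
    finsetSum_coeff, coeff_C_mul_X_pow, Finset.powersetCard_eq_filter, Finset.sum_filter, eq_comm]

lemma natDegree_prod_one_add_C_mul_X [IsDomain R] {ι : Type*} (s : Finset ι) {r : ι → R}
    (hr : ∀ i ∈ s, r i ≠ 0) : (∏ i ∈ s, (1 + C (r i) * X)).natDegree = s.card := by
  have hlin : ∀ i ∈ s, 1 + C (r i) * X = C (r i) * X + C 1 :=
    fun i _ => by rw [C_1, add_comm]
  have hdeg : ∀ i ∈ s, (C (r i) * X + C 1).natDegree = 1 :=
    fun i hi => natDegree_linear (hr i hi)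
  rw [Finset.prod_congr rfl hlin,
    natDegree_prod _ _ fun i hi => ne_zero_of_natDegree_gt ((hdeg i hi).symm ▸ one_pos),
    Finset.sum_congr rfl hdeg, Finset.card_eq_sum_ones]

lemma isCoprime_one_sub_C_mul_X_one_add_C_mul_X {F : Type*} [Field F] {a b : F}
    (hab : a + b ≠ 0) : IsCoprime (1 - C a * X) (1 + C b * X) := by
  refine ⟨C ((a + b)⁻¹ * b), C ((a + b)⁻¹ * a), ?_⟩
  calc _ = C ((a + b)⁻¹ * b + (a + b)⁻¹ * a) := by simp only [map_mul, map_add]; ring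
    _ = 1 := by rw [← mul_add, add_comm b, inv_mul_cancel₀ hab, map_one]

lemma _root_.IsCoprime.natDegree_le_of_mul_eq_mul {S : Type*} [CommRing S] [IsDomain S]
    {p q r s : S[X]} (h : IsCoprime p q) (hrs : r * q = p * s) (hr : r ≠ 0) (hq : q ≠ 0) :
    p.natDegree ≤ r.natDegree ∧ q.natDegree ≤ s.natDegree := by
  have hs : s ≠ 0 := by
    rintro rfl
    exact mul_ne_zero hr hq (hrs.trans (mul_zero p))
  exact ⟨natDegree_le_of_dvd (h.dvd_of_dvd_mul_right ⟨s, hrs⟩) hr,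
    natDegree_le_of_dvd (h.symm.dvd_of_dvd_mul_left ⟨r, by rw [← hrs, mul_comm]⟩) hs⟩

lemma reflect_monic {p : R[X]} {N : ℕ} (hp : p.natDegree ≤ N) (h0 : p.coeff 0 = 1) :
    (p.reflect N).Monic :=
  monic_of_natDegree_le_of_coeff_eq_one N (natDegree_reflect_le.trans (max_le le_rfl hp))
    (by rw [coeff_reflect, revAt_le le_rfl, Nat.sub_self, h0])

lemma natDegree_reflect_eq [Nontrivial R] {p : R[X]} {N : ℕ} (hp : p.natDegree ≤ N)
    (h0 : p.coeff 0 = 1) : (p.reflect N).natDegree = N :=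
  natDegree_eq_of_le_of_coeff_ne_zero (natDegree_reflect_le.trans (max_le le_rfl hp))
    (by rw [coeff_reflect, revAt_le le_rfl, Nat.sub_self, h0]; exact one_ne_zero)

lemma Monic.span_eq_of_forall_degree_lt {I : Ideal R[X]} {q : R[X]} (hq : q.Monic)
    (hqI : q ∈ I) (hI : ∀ f ∈ I, f.degree < q.degree → f = 0) : Ideal.span {q} = I := by
  nontriviality R
  refine le_antisymm ((Ideal.span_singleton_le_iff_mem I).mpr hqI) fun f hf => ?_
  have hmod : f %ₘ q = 0 := by
    refine hI _ ?_ (degree_modByMonic_lt f hq)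
    rw [modByMonic_eq_sub_mul_div]
    exact I.sub_mem hf (I.mul_mem_right _ hqI)
  rw [← modByMonic_add_div f q, hmod, zero_add]
  exact Ideal.mul_mem_right _ _ (Ideal.mem_span_singleton_self q)

lemma Monic.exists_basis_quotient {q : R[X]} (hq : q.Monic) {I : Ideal R[X]}
    (hI : Ideal.span {q} = I) :
    ∃ b : Module.Basis (Fin q.natDegree) R (R[X] ⧸ I),
      ∀ i, b i = Ideal.Quotient.mk I (X ^ (i : ℕ)) :=
  ⟨(AdjoinRoot.powerBasis' hq).basis.map (Ideal.quotientEquivAlgOfEq R hI).toLinearEquiv,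
    fun i => (congrArg (Ideal.quotientEquivAlgOfEq R hI)
      ((AdjoinRoot.powerBasis' hq).basis_eq_pow i)).trans rfl⟩

noncomputable def hankelFunctional (α : ℕ → R) : R[X] →ₗ[R] R :=
  lsum fun n => LinearMap.mulRight R (α n)

lemma hankelPair_eq_hankelFunctional (α : ℕ → R) (f g : R[X]) :
    hankelPair α f g = hankelFunctional α (f * g) := rfl

lemma hankelFunctional_eq_sum_range (α : ℕ → R) {p : R[X]} {D : ℕ} (hp : p.natDegree < D) :
    hankelFunctional α p = ∑ n ∈ Finset.range D, p.coeff n * α n :=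
  sum_over_range' _ (fun n => zero_mul (α n)) D hp

lemma mem_hankelRadical_iff (α : ℕ → R) (f : R[X]) :
    f ∈ hankelRadical α ↔ ∀ m, hankelFunctional α (f * X ^ m) = 0 := by
  refine ⟨fun hf m => hf (X ^ m), fun h g => ?_⟩
  rw [hankelPair_eq_hankelFunctional]
  induction g using Polynomial.induction_on' with
  | add p q hp hq => rw [mul_add, map_add, hp, hq, add_zero]
  | monomial m c =>
    rw [← C_mul_X_pow_eq_monomial, mul_left_comm, ← smul_eq_C_mul, map_smul, h m, smul_zero]

lemma coeff_reflect_mul_mk (α : ℕ → R) {p : R[X]} {D : ℕ} (hp : p.natDegree ≤ D) (m : ℕ) :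
    PowerSeries.coeff (D + m) ((p.reflect D : R⟦X⟧) * PowerSeries.mk α) =
      hankelFunctional α (p * X ^ m) := by
  have hdeg : (p * X ^ m).natDegree < D + m + 1 :=
    Nat.lt_succ_of_le (natDegree_mul_le.trans (add_le_add hp (natDegree_X_pow_le m)))
  rw [hankelFunctional_eq_sum_range α hdeg, PowerSeries.coeff_mul,
    Finset.Nat.sum_antidiagonal_eq_sum_range_succ_mk]
  conv_rhs => rw [← Finset.sum_range_reflect]
  refine Finset.sum_congr rfl fun j hj => ?_
  rw [Finset.mem_range] at hj
  simp only [coeff_coe, coeff_reflect, PowerSeries.coeff_mk, coeff_mul_X_pow']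
  rcases le_or_gt j D with h | h
  · rw [revAt_le h, if_pos (by omega)]
    congr 2; omega
  · rw [revAt_eq_self_of_lt h, if_neg (by omega), coeff_eq_zero_of_natDegree_lt (by omega),
      zero_mul, zero_mul]

lemma mem_hankelRadical_iff_exists_reflect_mul_mk_eq (α : ℕ → R) {p : R[X]} {D : ℕ}
    (hp : p.natDegree ≤ D) :
    p ∈ hankelRadical α ↔
      ∃ B : R[X], B.degree < D ∧ (p.reflect D : R⟦X⟧) * PowerSeries.mk α = B := by
  rw [mem_hankelRadical_iff]
  constructor
  · intro h
    refine ⟨PowerSeries.trunc D ((p.reflect D : R⟦X⟧) * PowerSeries.mk α),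
      PowerSeries.degree_trunc_lt _ D, PowerSeries.ext fun n => ?_⟩
    rw [coeff_coe, PowerSeries.coeff_trunc]
    split_ifs with hn
    · rfl
    · obtain ⟨m, rfl⟩ := Nat.exists_eq_add_of_le (not_lt.mp hn)
      rw [coeff_reflect_mul_mk α hp, h]
  · rintro ⟨B, hB, hpB⟩ m
    rw [← coeff_reflect_mul_mk α hp, hpB, coeff_coe]
    exact coeff_eq_zero_of_degree_lt (hB.trans_le (by exact_mod_cast Nat.le_add_right D m))

section RationalGeneratingFunction

variable {α : ℕ → R} {P E : R[X]}

lemma reflect_mem_hankelRadical (hPE : (P : R⟦X⟧) * PowerSeries.mk α = E) {K : ℕ}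
    (hPK : P.natDegree ≤ K) (hEK : E.degree < K) : P.reflect K ∈ hankelRadical α :=
  (mem_hankelRadical_iff_exists_reflect_mul_mk_eq α
    (natDegree_reflect_le.trans (max_le le_rfl hPK))).mpr ⟨E, hEK, by rw [reflect_reflect, hPE]⟩

lemma eq_zero_of_mem_hankelRadical {S : Type*} [CommRing S] [IsDomain S] {φ : R →+* S}
    (hφ : Function.Injective φ) (hPE : (P : R⟦X⟧) * PowerSeries.mk α = E) (hE : E ≠ 0)
    (hcop : IsCoprime (P.map φ) (E.map φ)) {f : R[X]} (hf : f ∈ hankelRadical α)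
    (hdeg : f.degree < max (E.natDegree + 1) P.natDegree) : f = 0 := by
  have : IsDomain R := hφ.isDomain φ
  by_contra hf0
  set D := max (E.natDegree + 1) P.natDegree - 1
  have hfD : f.natDegree ≤ D := by
    have := (natDegree_lt_iff_degree_lt hf0).mpr hdeg
    omega
  obtain ⟨B, hBD, hB⟩ := (mem_hankelRadical_iff_exists_reflect_mul_mk_eq α hfD).mp hf
  have hkey : f.reflect D * E = P * B := by
    apply coe_injective
    push_cast
    rw [← hPE, ← hB]
    ring
  have hr : f.reflect D ≠ 0 := fun h => hf0 (reflect_eq_zero_iff.mp h)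
  have hB0 : B ≠ 0 := by
    rintro rfl
    exact mul_ne_zero hr hE (hkey.trans (mul_zero P))
  -- `P ∣ rev(f)` and `E ∣ B`, which leaves no room for `D + 1 = max (deg E + 1) (deg P)`.
  obtain ⟨hP, hEB⟩ := hcop.natDegree_le_of_mul_eq_mul (r := (f.reflect D).map φ) (s := B.map φ)
    (by rw [← Polynomial.map_mul, ← Polynomial.map_mul, hkey])
    ((Polynomial.map_ne_zero_iff hφ).mpr hr) ((Polynomial.map_ne_zero_iff hφ).mpr hE)
  simp only [natDegree_map_eq_of_injective hφ] at hP hEB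
  have hrD : (f.reflect D).natDegree ≤ D := natDegree_reflect_le.trans (max_le le_rfl hfD)
  have hBD' : B.natDegree < D := (natDegree_lt_iff_degree_lt hB0).mpr hBD
  omega

theorem exists_basis_quotient_hankelRadical {S : Type*} [CommRing S] [IsDomain S]
    {φ : R →+* S} (hφ : Function.Injective φ) (hPE : (P : R⟦X⟧) * PowerSeries.mk α = E)
    (hP0 : P.coeff 0 = 1) (hE : E ≠ 0) (hcop : IsCoprime (P.map φ) (E.map φ)) {K : ℕ}
    (hK : max (E.natDegree + 1) P.natDegree = K) :
    ∃ b : Module.Basis (Fin K) R (R[X] ⧸ hankelRadical α),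
      ∀ i, b i = Ideal.Quotient.mk _ (X ^ (i : ℕ)) := by
  subst hK
  have : Nontrivial R := φ.domain_nontrivial
  have hPK : P.natDegree ≤ max (E.natDegree + 1) P.natDegree := le_max_right _ _
  have hEK : E.degree < max (E.natDegree + 1) P.natDegree := degree_le_natDegree.trans_lt
    (by exact_mod_cast (Nat.lt_succ_self E.natDegree).trans_le (le_max_left _ _))
  have hq := reflect_monic hPK hP0
  have hqK := natDegree_reflect_eq hPK hP0
  have hspan := hq.span_eq_of_forall_degree_lt (reflect_mem_hankelRadical hPE hPK hEK)
    fun f hf hdeg => eq_zero_of_mem_hankelRadical hφ hPE hE hcop hf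
      (by rwa [degree_eq_natDegree hq.ne_zero, hqK] at hdeg)
  obtain ⟨b, hb⟩ := hq.exists_basis_quotient hspan
  exact ⟨b.reindex (finCongr hqK), fun i => by simp [hb]⟩

end RationalGeneratingFunction

end Polynomial

namespace MvPolynomial

variable (σ A : Type*) [CommRing A] [Fintype σ]

theorem esymm_eq_zero_of_card_lt {n : ℕ} (h : Fintype.card σ < n) : esymm σ A n = 0 := by
  rw [esymm, Finset.powersetCard_eq_empty.mpr (by rwa [Finset.card_univ])]
  exact Finset.sum_empty

theorem coe_prod_one_add_C_mul_X_eq_mk_esymm :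
    ((∏ i, (1 + Polynomial.C (X i) * Polynomial.X) : (MvPolynomial σ A)[X]) :
        (MvPolynomial σ A)⟦X⟧) = PowerSeries.mk (esymm σ A) :=
  PowerSeries.ext fun n => by
    rw [Polynomial.coeff_coe, Polynomial.coeff_prod_one_add_C_mul_X, PowerSeries.coeff_mk, esymm]

variable [DecidableEq σ]

theorem mk_hsymm_eq_prod :
    PowerSeries.mk (hsymm σ A) = ∏ i, PowerSeries.rescale (X i) (PowerSeries.mk 1) := by
  refine PowerSeries.ext fun n => ?_
  rw [PowerSeries.coeff_mk, PowerSeries.coeff_prod, hsymm]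
  simp only [PowerSeries.coeff_rescale, PowerSeries.coeff_mk, Pi.one_apply, mul_one]
  -- a multiset of size `n` on `σ` is the same as its multiplicity function
  refine Finset.sum_bij (fun (s : Sym σ n) _ => Multiset.toFinsupp s.1) (fun s _ => ?_)
    (fun s _ t _ h => ?_) (fun l hl => ?_) (fun s _ => ?_)
  · rw [mem_finsuppAntidiag]
    exact ⟨(Multiset.sum_count_eq_card fun a _ => Finset.mem_univ a).trans s.2,
      Finset.subset_univ _⟩
  · exact Subtype.ext (Multiset.toFinsupp.injective h)
  · refine ⟨Sym.mk (Finsupp.toMultiset l) ?_, Finset.mem_univ _, by simp⟩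
    rw [mem_finsuppAntidiag] at hl
    rw [Finsupp.card_toMultiset, Finsupp.sum_fintype _ _ fun _ => rfl, ← hl.1]
    rfl
  · rw [Finset.prod_multiset_map_count, Finset.prod_subset (Finset.subset_univ _)]
    · rfl
    · intro i _ hi
      rw [Multiset.count_eq_zero.mpr (by simpa using hi), pow_zero]

theorem prod_one_sub_C_mul_X_mul_mk_hsymm :
    ((∏ i, (1 - Polynomial.C (X i) * Polynomial.X) : (MvPolynomial σ A)[X]) :
        (MvPolynomial σ A)⟦X⟧) * PowerSeries.mk (hsymm σ A) = 1 := by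
  push_cast
  rw [mk_hsymm_eq_prod, ← Finset.prod_mul_distrib]
  refine Finset.prod_eq_one fun i _ => ?_
  have := congrArg (PowerSeries.rescale (X i : MvPolynomial σ A))
    (PowerSeries.mk_one_mul_one_sub_eq_one (S := MvPolynomial σ A))
  rwa [map_mul, map_sub, map_one, PowerSeries.rescale_X, mul_comm] at this

end MvPolynomial

section Supersymmetric

variable (k : Type*) [Field k] (M N : ℕ)

noncomputable def hSusyDenom : (MvPolynomial (Fin M ⊕ Fin N) k)[X] :=
  ∏ i : Fin M, (1 - Polynomial.C (X (Sum.inl i)) * Polynomial.X)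

noncomputable def hSusyNumer : (MvPolynomial (Fin M ⊕ Fin N) k)[X] :=
  ∏ j : Fin N, (1 + Polynomial.C (X (Sum.inr j)) * Polynomial.X)

theorem mk_hSusy :
    PowerSeries.mk (hSusy k M N) =
      PowerSeries.map (rename (R := k) (Sum.inl : Fin M → Fin M ⊕ Fin N)).toRingHom
          (PowerSeries.mk (hsymm (Fin M) k)) *
        PowerSeries.map (rename (R := k) (Sum.inr : Fin N → Fin M ⊕ Fin N)).toRingHom
          (PowerSeries.mk (esymm (Fin N) k)) := by
  refine PowerSeries.ext fun n => ?_
  rw [PowerSeries.coeff_mk, PowerSeries.coeff_mul, ← Finset.Nat.sum_antidiagonal_swap]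
  simp only [Prod.fst_swap, Prod.snd_swap, PowerSeries.coeff_map, PowerSeries.coeff_mk,
    AlgHom.toRingHom_eq_coe, RingHom.coe_coe]
  rw [Finset.Nat.sum_antidiagonal_eq_sum_range_succ
    (fun l m => rename Sum.inl (hsymm (Fin M) k m) * rename Sum.inr (esymm (Fin N) k l)), hSusy]
  refine Finset.sum_subset (Finset.range_subset_range.mpr (by omega)) fun l hl hlN => ?_
  simp only [Finset.mem_range] at hl hlN
  rw [esymm_eq_zero_of_card_lt _ _ (by rw [Fintype.card_fin]; omega), map_zero, mul_zero]

theorem hSusyDenom_eq_map :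
    hSusyDenom k M N = Polynomial.map
      (rename (R := k) (Sum.inl : Fin M → Fin M ⊕ Fin N)).toRingHom
        (∏ i, (1 - Polynomial.C (X i) * Polynomial.X)) := by
  simp [hSusyDenom, Polynomial.map_prod]

theorem hSusyNumer_eq_map :
    hSusyNumer k M N = Polynomial.map
      (rename (R := k) (Sum.inr : Fin N → Fin M ⊕ Fin N)).toRingHom
        (∏ j, (1 + Polynomial.C (X j) * Polynomial.X)) := by
  simp [hSusyNumer, Polynomial.map_prod]

theorem hSusyDenom_mul_mk_hSusy :
    (hSusyDenom k M N : (MvPolynomial (Fin M ⊕ Fin N) k)⟦X⟧) * PowerSeries.mk (hSusy k M N) =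
      hSusyNumer k M N := by
  rw [mk_hSusy, ← mul_assoc, hSusyDenom_eq_map, Polynomial.polynomial_map_coe, ← map_mul,
    prod_one_sub_C_mul_X_mul_mk_hsymm, map_one, one_mul, hSusyNumer_eq_map,
    Polynomial.polynomial_map_coe, coe_prod_one_add_C_mul_X_eq_mk_esymm]

theorem coeff_zero_hSusyDenom : (hSusyDenom k M N).coeff 0 = 1 := by
  simp [hSusyDenom, Polynomial.coeff_zero_eq_eval_zero, Polynomial.eval_prod]

theorem hSusyNumer_ne_zero : hSusyNumer k M N ≠ 0 := fun h => by
  simpa [hSusyNumer, Polynomial.coeff_zero_eq_eval_zero, Polynomial.eval_prod] using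
    congrArg (Polynomial.coeff · 0) h

theorem natDegree_hSusyDenom : (hSusyDenom k M N).natDegree = M := by
  have hneg (x : MvPolynomial (Fin M ⊕ Fin N) k) :
      1 - Polynomial.C x * Polynomial.X = 1 + Polynomial.C (-x) * Polynomial.X := by
    rw [map_neg]; ring
  simp_rw [hSusyDenom, hneg]
  rw [Polynomial.natDegree_prod_one_add_C_mul_X _ fun i _ => neg_ne_zero.mpr (X_ne_zero _),
    Finset.card_univ, Fintype.card_fin]

theorem natDegree_hSusyNumer : (hSusyNumer k M N).natDegree = N := by
  rw [hSusyNumer, Polynomial.natDegree_prod_one_add_C_mul_X _ fun j _ => X_ne_zero _,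
    Finset.card_univ, Fintype.card_fin]

theorem isCoprime_map_hSusyDenom_hSusyNumer :
    IsCoprime
      ((hSusyDenom k M N).map (algebraMap _ (FractionRing (MvPolynomial (Fin M ⊕ Fin N) k))))
      ((hSusyNumer k M N).map (algebraMap _ (FractionRing (MvPolynomial (Fin M ⊕ Fin N) k)))) := by
  simp only [hSusyDenom, hSusyNumer, Polynomial.map_prod, Polynomial.map_sub, Polynomial.map_add,
    Polynomial.map_mul, Polynomial.map_one, Polynomial.map_C, Polynomial.map_X]
  refine IsCoprime.prod_left fun i _ => IsCoprime.prod_right fun j _ =>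
    Polynomial.isCoprime_one_sub_C_mul_X_one_add_C_mul_X ?_
  rw [← map_add, ne_eq, (IsFractionRing.injective _ _).eq_iff' (map_zero _)]
  intro h
  simpa using congrArg (eval fun s => if s = Sum.inl i then (1 : k) else 0) h

end Supersymmetric

theorem hankel_quotient_free_of_hSusy_general
    (k : Type*) [Field k] (M N : ℕ) :
    ∃ b : Module.Basis (Fin (max (N + 1) M)) (MvPolynomial (Fin M ⊕ Fin N) k)
        (Polynomial (MvPolynomial (Fin M ⊕ Fin N) k) ⧸ hankelRadical (hSusy k M N)),
      ∀ i : Fin (max (N + 1) M),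
        b i = Ideal.Quotient.mk (hankelRadical (hSusy k M N)) (Polynomial.X ^ (i : ℕ)) :=
  Polynomial.exists_basis_quotient_hankelRadical (IsFractionRing.injective _ (FractionRing _))
    (hSusyDenom_mul_mk_hSusy k M N) (coeff_zero_hSusyDenom k M N) (hSusyNumer_ne_zero k M N)
    (isCoprime_map_hSusyDenom_hSusyNumer k M N)
    (by rw [natDegree_hSusyDenom, natDegree_hSusyNumer])

/-- Let `k` be a field, `M ≥ 1`, `N ≥ 0`, `R' = k[γ₁,…,γ_M,β₁,…,β_N]`,
`K = max(N+1, M)`, and `αₙ = h_n(γ/β)`.  Then the quotient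
`A = R'[x] / rad(B_α)` is a free `R'`-module of rank `K`, with basis the images
of the monomials `1, x, …, x^{K−1}`. -/
theorem hankel_quotient_free_of_hSusy
    (k : Type*) [Field k] (M N : ℕ) (hM : 1 ≤ M) :
    ∃ b : Module.Basis (Fin (max (N + 1) M)) (MvPolynomial (Fin M ⊕ Fin N) k)
        (Polynomial (MvPolynomial (Fin M ⊕ Fin N) k) ⧸ hankelRadical (hSusy k M N)),
      ∀ i : Fin (max (N + 1) M),
        b i = Ideal.Quotient.mk (hankelRadical (hSusy k M N)) (Polynomial.X ^ (i : ℕ)) :=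
  hankel_quotient_free_of_hSusy_general k M N
end

section
/- Let k be a field, let V and W be k-vector spaces (not necessarily finite-dimensional), and let B_1 and B_2 be bilinear forms on V and W respectively. Let B_1 ⊗ B_2 denote the bilinear form on V ⊗_k W determined by (B_1 ⊗ B_2)(v ⊗ w, v' ⊗ w') = B_1(v,v') · B_2(w,w'). Then the radical of B_1 ⊗ B_2 equals the sum of the images of rad(B_1) ⊗_k W and V ⊗_k rad(B_2) in V ⊗_k W. -/
/-!
Viewing `B₁, B₂` as maps into the dual spaces, `B = dualDistrib ∘ map B₁ B₂`, and
`dualDistrib : V^* ⊗ W^* → (V ⊗ W)^*` is injective: expand a tensor in a basis of `V^*`.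
So `rad B = ker (map B₁ B₂)`. Factoring each `Bᵢ` through its image, the tensor product of the
two inclusions of the images is injective by flatness, and right exactness of `⊗` computes the
kernel of the tensor product of the two surjections onto the images.
-/

open TensorProduct LinearMap Module

theorem TensorProduct.dualDistrib_injective {R M N : Type*} [CommRing R]
    [AddCommGroup M] [Module R M] [AddCommGroup N] [Module R N] [Module.Free R (Dual R M)] :
    Function.Injective (dualDistrib R M N) := by
  rw [injective_iff_map_eq_zero]
  intro x hx
  obtain ⟨⟨ι, b⟩⟩ := Module.Free.exists_basis (R := R) (M := Dual R M)
  obtain ⟨c, rfl⟩ := TensorProduct.eq_repr_basis_left b x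
  suffices c = 0 by simp [this]
  ext i n
  have hcomb : Finsupp.linearCombination R b (c.mapRange (· n) rfl) = 0 := by
    ext m
    simpa [Finsupp.linearCombination_apply, Finsupp.sum_mapRange_index, map_finsuppSum,
      dualDistrib_apply, mul_comm] using congr($hx (m ⊗ₜ n))
  simpa using congr($(linearIndependent_iff.mp b.linearIndependent _ hcomb) i)

theorem LinearMap.exact_subtype_ker_rangeRestrict {R M P : Type*} [CommRing R]
    [AddCommGroup M] [Module R M] [AddCommGroup P] [Module R P] (f : M →ₗ[R] P) :
    Function.Exact (ker f).subtype f.rangeRestrict :=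
  exact_iff.mpr (by rw [ker_rangeRestrict, Submodule.range_subtype])

theorem TensorProduct.ker_map_of_flat {R M N P Q : Type*} [CommRing R]
    [AddCommGroup M] [Module R M] [AddCommGroup N] [Module R N]
    [AddCommGroup P] [Module R P] [AddCommGroup Q] [Module R Q]
    (f : M →ₗ[R] P) (g : N →ₗ[R] Q) [Module.Flat R P] [Module.Flat R (range g)] :
    ker (map f g) = range (rTensor N (ker f).subtype) ⊔ range (lTensor M (ker g).subtype) := by
  have hfactor : map f g = (map (range f).subtype (range g).subtype).comp
      (map f.rangeRestrict g.rangeRestrict) := by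
    rw [← map_comp, subtype_comp_codRestrict, subtype_comp_codRestrict]
  rw [hfactor, ker_comp_of_ker_eq_bot _ (ker_eq_bot.mpr (map_injective_of_flat_flat _ _
      (range f).injective_subtype (range g).injective_subtype)),
    map_ker f.exact_subtype_ker_rangeRestrict f.surjective_rangeRestrict
      g.exact_subtype_ker_rangeRestrict g.surjective_rangeRestrict, sup_comm]

/-- Let `k` be a field, `V, W` vector spaces with bilinear forms `B₁, B₂`, and let
`B` be the bilinear form on `V ⊗ W` determined by
`B(v ⊗ w, v' ⊗ w') = B₁(v,v') · B₂(w,w')`.  Then the radical of `B` is the sum of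
the images of `rad(B₁) ⊗ W` and `V ⊗ rad(B₂)` in `V ⊗ W`. -/
theorem ker_tensor_bilinear_form
    {k V W : Type*} [Field k]
    [AddCommGroup V] [Module k V] [AddCommGroup W] [Module k W]
    (B₁ : V →ₗ[k] V →ₗ[k] k) (B₂ : W →ₗ[k] W →ₗ[k] k)
    (B : (V ⊗[k] W) →ₗ[k] (V ⊗[k] W) →ₗ[k] k)
    (hB : ∀ (v v' : V) (w w' : W),
      B (v ⊗ₜ[k] w) (v' ⊗ₜ[k] w') = B₁ v v' * B₂ w w') :
    LinearMap.ker B =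
      LinearMap.range
          (TensorProduct.map (LinearMap.ker B₁).subtype (LinearMap.id : W →ₗ[k] W)) ⊔
        LinearMap.range
          (TensorProduct.map (LinearMap.id : V →ₗ[k] V) (LinearMap.ker B₂).subtype) := by
  have hB_eq : B = (dualDistrib k V W).comp (map B₁ B₂) := by
    ext v w v' w'
    simp [hB, dualDistrib_apply]
  rw [hB_eq, ker_comp_of_ker_eq_bot (map B₁ B₂) (ker_eq_bot_of_injective dualDistrib_injective)]
  -- instance search misses this: `range B₂` carries `Submodule.addCommMonoid`, not a group structure
  have : Module.Flat k (range B₂) :=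
    have := Module.Free.of_divisionRing k (range B₂); .of_free
  exact ker_map_of_flat B₁ B₂
end

section
/- Let k be a field and let R := k[a,b,c]/(ac − b²). Let M := R² with standard basis e_1, e_2, and let B be the symmetric R-bilinear form on M with Gram matrix [[a, b], [b, c]], i.e. B(e_1,e_1)=a, B(e_1,e_2)=B(e_2,e_1)=b, B(e_2,e_2)=c. Let B⊗B be the bilinear form on M ⊗_R M determined by (B⊗B)(u⊗v, u'⊗v') = B(u,u')·B(v,v'). Then the element v := e_1 ⊗ e_2 − e_2 ⊗ e_1 of M ⊗_R M lies in the radical of B⊗B, yet its image in (M/rad(B)) ⊗_R (M/rad(B)) is nonzero; consequently the canonical map (M/rad(B)) ⊗_R (M/rad(B)) → (M ⊗_R M)/rad(B⊗B) is not injective. -/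
open TensorProduct

set_option synthInstance.maxHeartbeats 1000000
set_option maxHeartbeats 2000000

/-- The ring `R = k[a,b,c]/(ac − b²)`. -/
abbrev ConeRing (k : Type*) [Field k] : Type _ :=
  MvPolynomial (Fin 3) k ⧸
    Ideal.span {(MvPolynomial.X 0 * MvPolynomial.X 2 - MvPolynomial.X 1 ^ 2 :
      MvPolynomial (Fin 3) k)}

/-- The images of the generators `a`, `b`, `c` in `k[a,b,c]/(ac − b²)`. -/
noncomputable def coneGen (k : Type*) [Field k] (i : Fin 3) : ConeRing k :=
  Ideal.Quotient.mk
    (Ideal.span {(MvPolynomial.X 0 * MvPolynomial.X 2 - MvPolynomial.X 1 ^ 2 :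
      MvPolynomial (Fin 3) k)}) (MvPolynomial.X i)

/-! Since `ac = b²`, the Gram determinant of `B` vanishes, and
`(B⊗B)(e₁ ⊗ e₂ − e₂ ⊗ e₁, u ⊗ w)` is `(u₀w₁ − u₁w₀)` times that determinant.
On the other hand `B(u, e₁) = u₀a + u₁b`, and `a`, `b` are linearly independent in `𝔪/𝔪²`
(`𝔪` the ideal of the cone point; the map `a ↦ ε₁, b ↦ ε₂, c ↦ 0` to `k ⊕ (k × k)` with
square-zero `k × k` sees this), so `rad B ⊆ 𝔪M`. Hence `(x, y) ↦ x₀y₁ mod 𝔪` descends to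
`M/rad B`, where it pairs the image of `e₁ ⊗ e₂ − e₂ ⊗ e₁` to `1`. -/

namespace TensorProduct

variable {R M N : Type*} [CommRing R] [AddCommGroup M] [Module R M] [AddCommGroup N] [Module R N]

theorem map_mkQ_ne_zero_of_map_ne_zero (p : Submodule R M) (f : M →ₗ[R] N)
    (hf : p ≤ LinearMap.ker f) {t : M ⊗[R] M} (ht : map f f t ≠ 0) :
    map p.mkQ p.mkQ t ≠ 0 := by
  intro h
  apply ht
  rw [← p.liftQ_mkQ f hf, map_comp, LinearMap.comp_apply, h, map_zero]

end TensorProduct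

section FinTwo

variable {R : Type*} [CommRing R]

theorem fin_two_eq_smul_add_smul (u : Fin 2 → R) : u = u 0 • ![1, 0] + u 1 • ![0, 1] := by
  ext i
  fin_cases i <;> simp

theorem tmul_sub_tmul_mem_ker_of_det_eq_zero
    (B : (Fin 2 → R) →ₗ[R] (Fin 2 → R) →ₗ[R] R)
    (B₂ : ((Fin 2 → R) ⊗[R] (Fin 2 → R)) →ₗ[R] ((Fin 2 → R) ⊗[R] (Fin 2 → R)) →ₗ[R] R)
    (hB₂ : ∀ u v u' v', B₂ (u ⊗ₜ v) (u' ⊗ₜ v') = B u u' * B v v')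
    (hdet : B ![1, 0] ![1, 0] * B ![0, 1] ![0, 1] = B ![1, 0] ![0, 1] * B ![0, 1] ![1, 0]) :
    (![1, 0] ⊗ₜ ![0, 1] - ![0, 1] ⊗ₜ ![1, 0] : (Fin 2 → R) ⊗[R] (Fin 2 → R)) ∈
      LinearMap.ker B₂ := by
  rw [LinearMap.mem_ker]
  refine TensorProduct.ext' fun u w => ?_
  rw [map_sub, LinearMap.sub_apply, hB₂, hB₂, LinearMap.zero_apply,
    fin_two_eq_smul_add_smul u, fin_two_eq_smul_add_smul w]
  simp only [map_add, map_smul, smul_eq_mul]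
  linear_combination (u 0 * w 1 - u 1 * w 0) * hdet

theorem map_tmul_sub_tmul_ne_zero_of_ne_top {I : Ideal R} (hI : I ≠ ⊤) :
    map (LinearMap.pi fun i => I.mkQ ∘ₗ LinearMap.proj i)
        (LinearMap.pi fun i => I.mkQ ∘ₗ LinearMap.proj i)
        (![1, 0] ⊗ₜ ![0, 1] - ![0, 1] ⊗ₜ ![1, 0] : (Fin 2 → R) ⊗[R] (Fin 2 → R)) ≠ 0 := by
  have : Nontrivial (R ⧸ I) := Ideal.Quotient.nontrivial_iff.mpr hI
  intro h
  have hpair := congrArg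
    (lift ((LinearMap.mul R (R ⧸ I)).compl₁₂ (LinearMap.proj 0) (LinearMap.proj 1))) h
  simp at hpair

end FinTwo

section ConeRing

variable (k : Type*) [Field k]

theorem coneGen_zero_mul_coneGen_two : coneGen k 0 * coneGen k 2 = coneGen k 1 ^ 2 := by
  unfold coneGen
  rw [← map_mul, ← map_pow, Ideal.Quotient.eq]
  exact Ideal.subset_span rfl

noncomputable def coneToSqZero : ConeRing k →+* TrivSqZeroExt k (k × k) :=
  Ideal.Quotient.lift _
    (MvPolynomial.aeval
      (![TrivSqZeroExt.inr (1, 0), TrivSqZeroExt.inr (0, 1), 0] :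
        Fin 3 → TrivSqZeroExt k (k × k))).toRingHom
    (by
      intro x hx
      obtain ⟨q, rfl⟩ := Ideal.mem_span_singleton.mp hx
      simp [pow_two, TrivSqZeroExt.inr_mul_inr])

@[simp] theorem coneToSqZero_coneGen_zero :
    coneToSqZero k (coneGen k 0) = TrivSqZeroExt.inr (1, 0) := by
  simp [coneToSqZero, coneGen]

@[simp] theorem coneToSqZero_coneGen_one :
    coneToSqZero k (coneGen k 1) = TrivSqZeroExt.inr (0, 1) := by
  simp [coneToSqZero, coneGen]

/-- Evaluation at the cone point `a = b = c = 0`. -/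
noncomputable def coneAug : ConeRing k →+* k :=
  (TrivSqZeroExt.fstHom k k (k × k)).toRingHom.comp (coneToSqZero k)

theorem mem_ker_coneAug_of_mul_add_mul_eq_zero {x y : ConeRing k}
    (h : x * coneGen k 0 + y * coneGen k 1 = 0) :
    x ∈ RingHom.ker (coneAug k) ∧ y ∈ RingHom.ker (coneAug k) := by
  have hsnd := congrArg (fun r => (coneToSqZero k r).snd) h
  simp only [map_add, map_mul, coneToSqZero_coneGen_zero, coneToSqZero_coneGen_one, map_zero,
    TrivSqZeroExt.snd_add, TrivSqZeroExt.snd_mul, TrivSqZeroExt.snd_inr, TrivSqZeroExt.fst_inr,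
    TrivSqZeroExt.snd_zero, MulOpposite.op_zero, zero_smul, add_zero, Prod.ext_iff] at hsnd
  simpa [coneAug] using hsnd

end ConeRing

/-- Let `R = k[a,b,c]/(ac − b²)`, `M = R²`, and `B` the symmetric bilinear form on
`M` with Gram matrix `[[a,b],[b,c]]`.  Let `B⊗B` be the induced form on `M ⊗_R M`.
Then `v = e₁ ⊗ e₂ − e₂ ⊗ e₁` lies in the radical of `B⊗B`, yet its image in
`(M/rad B) ⊗_R (M/rad B)` is nonzero; consequently the canonical map
`(M/rad B) ⊗_R (M/rad B) → (M ⊗_R M)/rad(B⊗B)` is not injective. -/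
theorem cone_ring_tensor_radical_not_injective
    (k : Type*) [Field k]
    (B : (Fin 2 → ConeRing k) →ₗ[ConeRing k]
          (Fin 2 → ConeRing k) →ₗ[ConeRing k] ConeRing k)
    (hB11 : B ![1, 0] ![1, 0] = coneGen k 0)
    (hB12 : B ![1, 0] ![0, 1] = coneGen k 1)
    (hB21 : B ![0, 1] ![1, 0] = coneGen k 1)
    (hB22 : B ![0, 1] ![0, 1] = coneGen k 2)
    (B₂ : ((Fin 2 → ConeRing k) ⊗[ConeRing k] (Fin 2 → ConeRing k))
            →ₗ[ConeRing k]
          ((Fin 2 → ConeRing k) ⊗[ConeRing k] (Fin 2 → ConeRing k))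
            →ₗ[ConeRing k] ConeRing k)
    (hB₂ : ∀ u v u' v', B₂ (u ⊗ₜ v) (u' ⊗ₜ v') = B u u' * B v v') :
    ((![1, 0] ⊗ₜ ![0, 1] - ![0, 1] ⊗ₜ ![1, 0] :
        (Fin 2 → ConeRing k) ⊗[ConeRing k] (Fin 2 → ConeRing k))
      ∈ LinearMap.ker B₂)
    ∧ TensorProduct.map (LinearMap.ker B).mkQ (LinearMap.ker B).mkQ
        (![1, 0] ⊗ₜ ![0, 1] - ![0, 1] ⊗ₜ ![1, 0]) ≠ 0
    ∧ ∀ φ : (((Fin 2 → ConeRing k) ⧸ LinearMap.ker B)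
          ⊗[ConeRing k] ((Fin 2 → ConeRing k) ⧸ LinearMap.ker B))
          →ₗ[ConeRing k]
        (((Fin 2 → ConeRing k) ⊗[ConeRing k] (Fin 2 → ConeRing k))
          ⧸ LinearMap.ker B₂),
        (∀ x y, φ ((LinearMap.ker B).mkQ x ⊗ₜ (LinearMap.ker B).mkQ y) =
          (LinearMap.ker B₂).mkQ (x ⊗ₜ y)) →
        ¬ Function.Injective φ := by
  have hrad := tmul_sub_tmul_mem_ker_of_det_eq_zero B B₂ hB₂ (by
    rw [hB11, hB12, hB21, hB22, coneGen_zero_mul_coneGen_two, sq])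
  set 𝔪 := RingHom.ker (coneAug k)
  have hker : LinearMap.ker B ≤
      LinearMap.ker (LinearMap.pi fun i => 𝔪.mkQ ∘ₗ LinearMap.proj i) := by
    intro u hu
    have hu₁ : u 0 * coneGen k 0 + u 1 * coneGen k 1 = 0 := calc
      _ = B u ![1, 0] := by
        conv_rhs => rw [fin_two_eq_smul_add_smul u]
        simp only [map_add, map_smul, LinearMap.add_apply, LinearMap.smul_apply, smul_eq_mul,
          hB11, hB21]
      _ = 0 := by rw [LinearMap.mem_ker.mp hu, LinearMap.zero_apply]
    obtain ⟨h0, h1⟩ := mem_ker_coneAug_of_mul_add_mul_eq_zero k hu₁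
    ext i
    fin_cases i <;> simpa [Ideal.Quotient.eq_zero_iff_mem]
  have hne := map_mkQ_ne_zero_of_map_ne_zero _ _ hker
    (map_tmul_sub_tmul_ne_zero_of_ne_top (RingHom.ker_ne_top (coneAug k)))
  refine ⟨hrad, hne, fun φ hφ hφinj => hne (hφinj ?_)⟩
  rw [map_zero, map_sub, map_tmul, map_tmul, map_sub, hφ, hφ, ← map_sub,
    Submodule.mkQ_apply, Submodule.Quotient.mk_eq_zero]
  exact hrad
end

section
/- Let K be a field and let E_1, E_2, ρ_0, ρ_1 ∈ K. Set A := K[X]/(X² − E_1 X + E_2), let x denote the image of X in A (so A is a free K-module with basis {1, x}), and let ε : A → K be the K-linear map with ε(1) = ρ_0 and ε(x) = ρ_1. Set ρ := −(E_2 ρ_0² − E_1 ρ_0 ρ_1 + ρ_1²) and 𝒟 := E_1² − 4E_2, and assume ρ ≠ 0. Define w := ρ^{−1}·((E_1 ρ_1 − 2E_2 ρ_0)·1 + (E_1 ρ_0 − 2ρ_1)·x) ∈ A. Then in the formal power series ring K[[T]] the identity (ρ − ρ_0 𝒟 T + 𝒟 T²) · ∑_{n≥0} ε(wⁿ) Tⁿ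 = ρ_0 ρ + (2ρ − ρ_0² 𝒟) T holds; equivalently, the generating function of the closed-surface evaluations ε(wⁿ) of the deformed rank-two Frobenius algebra A is the rational function (ρ_0 ρ + (2ρ − ρ_0² 𝒟)T)/(ρ − ρ_0 𝒟 T + 𝒟 T²). -/
/-- The rank-two algebra `A = K[X]/(X² − E₁X + E₂)`. -/
abbrev RankTwoAlg (K : Type*) [Field K] (E₁ E₂ : K) : Type _ :=
  Polynomial K ⧸
    Ideal.span {(Polynomial.X ^ 2 - Polynomial.C E₁ * Polynomial.X + Polynomial.C E₂ :
      Polynomial K)}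

/-- The image `x` of `X` in `A = K[X]/(X² − E₁X + E₂)`. -/
noncomputable def rankTwoGen (K : Type*) [Field K] (E₁ E₂ : K) : RankTwoAlg K E₁ E₂ :=
  Ideal.Quotient.mk
    (Ideal.span {(Polynomial.X ^ 2 - Polynomial.C E₁ * Polynomial.X + Polynomial.C E₂ :
      Polynomial K)}) Polynomial.X

/-!
Up to the factor `ρ⁻¹`, `w` is `u = a + b x` with `a = E₁ρ₁ − 2E₂ρ₀`, `b = E₁ρ₀ − 2ρ₁`, whose trace
`2a + bE₁` is `ρ₀𝒟` and whose norm `a² + abE₁ + b²E₂` is `ρ𝒟`. Cayley–Hamilton for `u` gives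
`ρw² = ρ₀𝒟 w − 𝒟`, so `ε(wⁿ)` satisfies a linear recurrence, and multiplying its generating function
by the reversed characteristic polynomial `ρ − ρ₀𝒟T + 𝒟T²` leaves a polynomial of degree one,
read off from `ε(1) = ρ₀` and `ε(w) = 2`.
-/

open PowerSeries in
theorem PowerSeries.quadratic_mul_mk_of_recurrence {R : Type*} [CommRing R] (a : ℕ → R)
    (c b d : R) (h : ∀ n, c * a (n + 2) = b * a (n + 1) - d * a n) :
    (C c - C b * X + C d * X ^ 2) * mk a = C (c * a 0) + C (c * a 1 - b * a 0) * X := by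
  ext (_ | _ | n)
  · simp
  · simp [sub_mul, add_mul, mul_assoc, coeff_X_pow_mul']
  · simp [sub_mul, add_mul, mul_assoc, coeff_X_pow_mul', coeff_succ_X_mul, h]

theorem rankTwoGen_mul_self (K : Type*) [Field K] (E₁ E₂ : K) :
    rankTwoGen K E₁ E₂ * rankTwoGen K E₁ E₂ = E₁ • rankTwoGen K E₁ E₂ - E₂ • 1 := by
  have hC (a : K) : Ideal.Quotient.mk _ (Polynomial.C a) = a • (1 : RankTwoAlg K E₁ E₂) :=
    Algebra.algebraMap_eq_smul_one (A := RankTwoAlg K E₁ E₂) a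
  have h := Ideal.Quotient.eq_zero_iff_mem.mpr (Ideal.mem_span_singleton_self
    (Polynomial.X ^ 2 - Polynomial.C E₁ * Polynomial.X + Polynomial.C E₂ : Polynomial K))
  rw [map_add, map_sub, map_mul, map_pow, hC, hC, smul_one_mul] at h
  change rankTwoGen K E₁ E₂ ^ 2 - E₁ • rankTwoGen K E₁ E₂ + E₂ • 1 = 0 at h
  rw [← pow_two]
  linear_combination (norm := module) h

section QuadraticElement

variable {K A : Type*} [CommRing K] [Ring A] [Algebra K A]

theorem smul_one_add_smul_mul_self {x : A} {E₁ E₂ : K} (hx : x * x = E₁ • x - E₂ • 1) (a b : K) :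
    (a • 1 + b • x) * (a • 1 + b • x) =
      (2 * a + b * E₁) • (a • 1 + b • x) - (a ^ 2 + a * b * E₁ + b ^ 2 * E₂) • (1 : A) := by
  simp only [mul_add, add_mul, smul_mul_smul_comm, one_mul, mul_one, hx]
  match_scalars <;> ring

theorem LinearMap.map_pow_recurrence (ε : A →ₗ[K] K) {w : A} {c b d : K}
    (hw : c • (w * w) = b • w - d • 1) (n : ℕ) :
    c * ε (w ^ (n + 2)) = b * ε (w ^ (n + 1)) - d * ε (w ^ n) := by
  have h : c • w ^ (n + 2) = b • w ^ (n + 1) - d • w ^ n := by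
    rw [add_comm n 2, pow_add, pow_two, ← smul_mul_assoc, hw, sub_mul, smul_mul_assoc,
      smul_mul_assoc, one_mul, ← pow_succ']
  simpa only [map_smul, map_sub, smul_eq_mul] using congrArg ε h

end QuadraticElement

/-- Let `K` be a field, `A = K[X]/(X² − E₁X + E₂)` with generator `x`, and let
`ε : A → K` be the `K`-linear trace with `ε(1) = ρ₀` and `ε(x) = ρ₁`.  Set
`ρ = −(E₂ρ₀² − E₁ρ₀ρ₁ + ρ₁²)`, `𝒟 = E₁² − 4E₂`, assume `ρ ≠ 0`, and let
`w = ρ⁻¹·((E₁ρ₁ − 2E₂ρ₀)·1 + (E₁ρ₀ − 2ρ₁)·x)` be the handle element.  Then in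
`K[[T]]`:
`(ρ − ρ₀𝒟T + 𝒟T²) · ∑ₙ ε(wⁿ)Tⁿ = ρ₀ρ + (2ρ − ρ₀²𝒟)T`. -/
theorem rank_two_frobenius_generating_function
    (K : Type*) [Field K] (E₁ E₂ ρ₀ ρ₁ : K)
    (ρ : K) (hρdef : ρ = -(E₂ * ρ₀ ^ 2 - E₁ * ρ₀ * ρ₁ + ρ₁ ^ 2)) (hρ : ρ ≠ 0)
    (𝒟 : K) (h𝒟 : 𝒟 = E₁ ^ 2 - 4 * E₂)
    (ε : RankTwoAlg K E₁ E₂ →ₗ[K] K)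
    (hε1 : ε 1 = ρ₀) (hεx : ε (rankTwoGen K E₁ E₂) = ρ₁)
    (w : RankTwoAlg K E₁ E₂)
    (hw : w = ρ⁻¹ • ((E₁ * ρ₁ - 2 * E₂ * ρ₀) • (1 : RankTwoAlg K E₁ E₂) +
      (E₁ * ρ₀ - 2 * ρ₁) • rankTwoGen K E₁ E₂)) :
    (PowerSeries.C (R := K) ρ - PowerSeries.C (R := K) (ρ₀ * 𝒟) * PowerSeries.X +
        PowerSeries.C (R := K) 𝒟 * PowerSeries.X ^ 2) *
      PowerSeries.mk (fun n => ε (w ^ n)) =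
    PowerSeries.C (R := K) (ρ₀ * ρ) + PowerSeries.C (R := K) (2 * ρ - ρ₀ ^ 2 * 𝒟) * PowerSeries.X := by
  have hu := smul_one_add_smul_mul_self (rankTwoGen_mul_self K E₁ E₂)
    (E₁ * ρ₁ - 2 * E₂ * ρ₀) (E₁ * ρ₀ - 2 * ρ₁)
  have htrace : 2 * (E₁ * ρ₁ - 2 * E₂ * ρ₀) + (E₁ * ρ₀ - 2 * ρ₁) * E₁ = ρ₀ * 𝒟 := by
    rw [h𝒟]; ring
  have hnorm : (E₁ * ρ₁ - 2 * E₂ * ρ₀) ^ 2 + (E₁ * ρ₁ - 2 * E₂ * ρ₀) * (E₁ * ρ₀ - 2 * ρ₁) * E₁ +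
      (E₁ * ρ₀ - 2 * ρ₁) ^ 2 * E₂ = ρ * 𝒟 := by
    rw [hρdef, h𝒟]; ring
  have hww : ρ • (w * w) = (ρ₀ * 𝒟) • w - 𝒟 • 1 := by
    rw [hw, smul_mul_smul_comm, hu, htrace, hnorm]
    match_scalars <;> field_simp
  have hεw : ε w = 2 := by
    rw [hw, map_smul, map_add, map_smul, map_smul, hε1, hεx, smul_eq_mul, smul_eq_mul,
      smul_eq_mul, inv_mul_eq_iff_eq_mul₀ hρ, hρdef]
    ring
  rw [PowerSeries.quadratic_mul_mk_of_recurrence _ _ _ _ (ε.map_pow_recurrence hww), pow_zero,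
    pow_one, hε1, hεw, mul_comm ρ ρ₀]
  congr 3
  ring
end
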